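/- Let $a > 0$ be a real number. For each $n \ge 1$ and $1 \le i \le n$, let $t_i = \frac{i}{n} - \frac{1}{2n}$ and define $D_i^{(a)} = i \binom{n}{i} \int_0^1 |x - t_i|^a \, x^{i-1} (1-x)^{n-i} \, dx$. Then $\sum_{i=1}^{n} D_i^{(a)} = O\left(\frac{1}{n^{a/2 - 1}}\right)$; that is, there exist a constant $C > 0$ and $N$ such that for all $n \ge N$, $\sum_{i=1}^{n} D_i^{(a)} \le C \, n^{1 - a/2}$. -/

import Mathlib

/-!
The `i`-th order statistic of `n` uniform points has the Beta density
`i * choose n i * x ^ (i - 1) * (1 - x) ^ (n - i)`. Its even moments about the anchor `tᵢ`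
satisfy `E (X - tᵢ) ^ (2m) ≤ m! / n ^ m`: integrating by parts against the Beta weight gives
`n * E (X - t) ^ (2m + 2) ≤ (m + 1) * E (X - t) ^ (2m)`, because `x (1 - x) ≤ 1/4` and the anchor
is chosen so that `|i - (n + 1) tᵢ| ≤ 1`. Splitting `|u| ^ a ≤ ε ^ a + ε ^ (a - 2k) u ^ (2k)` at the
scale `ε = n ^ (-1/2)` with `2k ≥ a` then bounds each summand by `(k! + 1) n ^ (-a/2)`.
-/

open intervalIntegral Nat Set

theorem integral_pow_mul_one_sub_pow (j r : ℕ) :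
    ∫ x in (0:ℝ)..1, x ^ j * (1 - x) ^ r = (j ! * r ! : ℝ) / (j + r + 1)! := by
  have h := Complex.betaIntegral_eq_Gamma_mul_div (j + 1) (r + 1)
    (by norm_cast; positivity) (by norm_cast; positivity)
  rw [show (j + 1 + (r + 1) : ℂ) = ↑(j + r + 1 : ℕ) + 1 by push_cast; ring,
    Complex.Gamma_nat_eq_factorial, Complex.Gamma_nat_eq_factorial,
    Complex.Gamma_nat_eq_factorial, Complex.betaIntegral] at h
  simp only [add_sub_cancel_right, Complex.cpow_natCast] at h
  rw [← Complex.ofReal_inj, ← intervalIntegral.integral_ofReal]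
  push_cast
  exact h

theorem two_mul_abs_pow_two_mul_add_one_le (u : ℝ) (m : ℕ) :
    2 * |u| ^ (2 * m + 1) ≤ u ^ (2 * m) + u ^ (2 * m + 2) := by
  have h := mul_nonneg (pow_nonneg (abs_nonneg u) (2 * m)) (sq_nonneg (1 - |u|))
  rw [← pow_abs_two_mul (n := m) u, show 2 * m + 2 = 2 * (m + 1) by ring,
    ← pow_abs_two_mul (n := m + 1) u]
  linear_combination h

theorem rpow_le_rpow_add_rpow_sub_mul_pow {u ε a : ℝ} {n : ℕ} (hu : 0 ≤ u) (hε : 0 < ε)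
    (ha : 0 ≤ a) (han : a ≤ n) : u ^ a ≤ ε ^ a + ε ^ (a - n) * u ^ n := by
  rcases le_total u ε with huε | hεu
  · have := Real.rpow_le_rpow hu huε ha
    have := mul_nonneg (Real.rpow_nonneg hε.le (a - n)) (pow_nonneg hu n)
    linarith
  · have hsplit : u ^ a = u ^ (a - n) * u ^ n := by
      rw [← Real.rpow_natCast, ← Real.rpow_add (hε.trans_le hεu), sub_add_cancel]
    have := mul_le_mul_of_nonneg_right
      (Real.rpow_le_rpow_of_nonpos hε hεu (sub_nonpos.2 han)) (pow_nonneg hu n)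
    have := Real.rpow_nonneg hε.le a
    linarith

theorem pow_mul_one_sub_pow_nonneg (j r : ℕ) {x : ℝ} (hx : x ∈ Icc (0:ℝ) 1) :
    0 ≤ x ^ j * (1 - x) ^ r :=
  mul_nonneg (pow_nonneg hx.1 j) (pow_nonneg (sub_nonneg.2 hx.2) r)

section BetaMoment

variable (j r : ℕ) (t : ℝ)

noncomputable def betaMoment (q : ℕ) : ℝ :=
  ∫ x in (0:ℝ)..1, (x - t) ^ q * (x ^ j * (1 - x) ^ r)

theorem betaMoment_two_mul_nonneg (m : ℕ) : 0 ≤ betaMoment j r t (2 * m) :=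
  integral_nonneg zero_le_one fun _ hx =>
    mul_nonneg (even_two_mul m |>.pow_nonneg _) (pow_mul_one_sub_pow_nonneg j r hx)

theorem mul_choose_mul_betaMoment_zero :
    (j + 1) * ((j + r + 1).choose (j + 1) : ℝ) * betaMoment j r t 0 = 1 := by
  have h := add_choose_mul_factorial_mul_factorial r (j + 1)
  rw [add_comm r, factorial_succ, ← add_right_comm] at h
  simp only [betaMoment, pow_zero, one_mul, integral_pow_mul_one_sub_pow]
  rw [mul_div_assoc', div_eq_one_iff_eq (by positivity), ← h]
  push_cast
  ring

theorem hasDerivAt_pow_mul_one_sub_pow (x : ℝ) :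
    HasDerivAt (fun x : ℝ => x ^ (j + 1) * (1 - x) ^ (r + 1))
      ((j + 1 - (j + r + 2) * x) * (x ^ j * (1 - x) ^ r)) x := by
  have h := (hasDerivAt_pow (j + 1) x).fun_mul ((hasDerivAt_id x).const_sub 1 |>.fun_pow (r + 1))
  refine h.congr_deriv ?_
  simp only [Nat.add_sub_cancel, id]
  push_cast
  ring

-- Integrate the derivative of `(x - t) ^ (q + 1) * x ^ (j + 1) * (1 - x) ^ (r + 1)`, which vanishes
-- at `0` and `1`, writing `j + 1 - (j + r + 2) x = (j + 1 - (j + r + 2) t) - (j + r + 2) (x - t)`.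
theorem betaMoment_recurrence (q : ℕ) :
    (q + 1) * (∫ x in (0:ℝ)..1, (x - t) ^ q * (x ^ (j + 1) * (1 - x) ^ (r + 1)))
      + (j + 1 - (j + r + 2) * t) * betaMoment j r t (q + 1)
      = (j + r + 2) * betaMoment j r t (q + 2) := by
  have hderiv (x : ℝ) :
      HasDerivAt (fun x : ℝ => (x - t) ^ (q + 1) * (x ^ (j + 1) * (1 - x) ^ (r + 1)))
      ((q + 1) * (x - t) ^ q * (x ^ (j + 1) * (1 - x) ^ (r + 1))
        + (x - t) ^ (q + 1) * ((j + 1 - (j + r + 2) * x) * (x ^ j * (1 - x) ^ r))) x := by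
    have h := ((hasDerivAt_id x).sub_const t |>.fun_pow (q + 1)).fun_mul
      (hasDerivAt_pow_mul_one_sub_pow j r x)
    refine h.congr_deriv ?_
    simp only [Nat.add_sub_cancel, id]
    push_cast
    ring
  have hftc := integral_eq_sub_of_hasDerivAt (fun x _ => hderiv x)
    (Continuous.intervalIntegrable (by fun_prop) 0 1)
  simp only [betaMoment]
  rw [← integral_const_mul, ← integral_const_mul, ← integral_const_mul, ← integral_add,
    ← sub_eq_zero, ← integral_sub]
  · simp only [one_pow, sub_self, zero_pow (succ_ne_zero _), mul_zero, zero_mul] at hftc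
    refine (integral_congr fun x _ => ?_).trans hftc
    ring
  all_goals exact Continuous.intervalIntegrable (by fun_prop) 0 1

theorem integral_sub_pow_mul_pow_succ_mul_one_sub_pow_succ_le (m : ℕ) :
    ∫ x in (0:ℝ)..1, (x - t) ^ (2 * m) * (x ^ (j + 1) * (1 - x) ^ (r + 1))
      ≤ betaMoment j r t (2 * m) / 4 := by
  rw [betaMoment, ← integral_div]
  refine integral_mono_on zero_le_one (Continuous.intervalIntegrable (by fun_prop) 0 1)
    (Continuous.intervalIntegrable (by fun_prop) 0 1) fun x hx => ?_
  have hx4 : x * (1 - x) ≤ 1 / 4 := by nlinarith [sq_nonneg (1 - 2 * x)]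
  have hw := mul_nonneg (even_two_mul m |>.pow_nonneg (x - t))
    (pow_mul_one_sub_pow_nonneg j r hx)
  calc (x - t) ^ (2 * m) * (x ^ (j + 1) * (1 - x) ^ (r + 1))
      = (x - t) ^ (2 * m) * (x ^ j * (1 - x) ^ r) * (x * (1 - x)) := by ring
    _ ≤ (x - t) ^ (2 * m) * (x ^ j * (1 - x) ^ r) * (1 / 4) :=
      mul_le_mul_of_nonneg_left hx4 hw
    _ = _ := by ring

theorem abs_betaMoment_two_mul_add_one_le (m : ℕ) :
    |betaMoment j r t (2 * m + 1)|
      ≤ (betaMoment j r t (2 * m) + betaMoment j r t (2 * m + 2)) / 2 := by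
  rw [betaMoment, betaMoment, betaMoment, ← integral_add, ← integral_div]
  · refine (abs_integral_le_integral_abs zero_le_one).trans <|
      integral_mono_on zero_le_one (Continuous.intervalIntegrable (by fun_prop) 0 1)
        (Continuous.intervalIntegrable (by fun_prop) 0 1) fun x hx => ?_
    have hw := pow_mul_one_sub_pow_nonneg j r hx
    rw [abs_mul, abs_pow, abs_of_nonneg hw]
    nlinarith [mul_le_mul_of_nonneg_right (two_mul_abs_pow_two_mul_add_one_le (x - t) m) hw]
  all_goals exact Continuous.intervalIntegrable (by fun_prop) 0 1

variable {j r t}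

theorem betaMoment_two_mul_succ_le (hd : |j + 1 - (j + r + 2) * t| ≤ 1) (m : ℕ) :
    (j + r + 1) * betaMoment j r t (2 * (m + 1)) ≤ (m + 1) * betaMoment j r t (2 * m) := by
  have hrec := betaMoment_recurrence j r t (2 * m)
  have hK := integral_sub_pow_mul_pow_succ_mul_one_sub_pow_succ_le j r t m
  have hodd := abs_betaMoment_two_mul_add_one_le j r t m
  have hdM : (j + 1 - (j + r + 2) * t) * betaMoment j r t (2 * m + 1)
      ≤ |betaMoment j r t (2 * m + 1)| :=
    (le_abs_self _).trans <| by
      rw [abs_mul]; exact mul_le_of_le_one_left (abs_nonneg _) hd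
  have h0 := betaMoment_two_mul_nonneg j r t m
  have h2 := betaMoment_two_mul_nonneg j r t (m + 1)
  rw [mul_add_one] at h2 ⊢
  push_cast at hrec
  linarith [mul_le_mul_of_nonneg_left hK (by positivity : (0:ℝ) ≤ 2 * m + 1),
    mul_nonneg m.cast_nonneg h0]

theorem betaMoment_two_mul_le (hd : |j + 1 - (j + r + 2) * t| ≤ 1) (m : ℕ) :
    betaMoment j r t (2 * m) ≤ m ! / ((j + r + 1 : ℝ) ^ m) * betaMoment j r t 0 := by
  induction m with
  | zero => simp
  | succ m ih =>
    have hN : (0:ℝ) < j + r + 1 := by positivity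
    have hstep := betaMoment_two_mul_succ_le hd m
    calc betaMoment j r t (2 * (m + 1))
        ≤ (m + 1) / (j + r + 1) * betaMoment j r t (2 * m) := by
          rw [div_mul_eq_mul_div, le_div_iff₀ hN]; linarith
      _ ≤ (m + 1) / (j + r + 1) * (m ! / ((j + r + 1 : ℝ) ^ m) * betaMoment j r t 0) := by
          gcongr
      _ = (m + 1)! / ((j + r + 1 : ℝ) ^ (m + 1)) * betaMoment j r t 0 := by
          rw [factorial_succ]; push_cast; field_simp; ring

end BetaMoment

theorem mul_choose_mul_integral_abs_rpow_le (j r k : ℕ) {t a : ℝ}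
    (hd : |j + 1 - (j + r + 2) * t| ≤ 1) (ha : 0 ≤ a) (hak : a ≤ 2 * k) :
    (j + 1) * ((j + r + 1).choose (j + 1) : ℝ)
        * ∫ x in (0:ℝ)..1, |x - t| ^ a * (x ^ j * (1 - x) ^ r)
      ≤ (k ! + 1) * (j + r + 1 : ℝ) ^ (-(a / 2)) := by
  set N : ℝ := j + r + 1
  have hN0 : 0 < N := by positivity
  set ε : ℝ := N ^ (-(1 / 2) : ℝ)
  have hε0 : 0 < ε := by positivity
  have hεa : ε ^ a = N ^ (-(a / 2)) := by
    rw [← Real.rpow_mul hN0.le]; ring_nf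
  have hεak : ε ^ (a - 2 * k) = N ^ (-(a / 2)) * N ^ k := by
    rw [← Real.rpow_mul hN0.le, ← Real.rpow_natCast, ← Real.rpow_add hN0]; ring_nf
  have hsplit : ∫ x in (0:ℝ)..1, |x - t| ^ a * (x ^ j * (1 - x) ^ r)
      ≤ ε ^ a * betaMoment j r t 0 + ε ^ (a - 2 * k) * betaMoment j r t (2 * k) := by
    simp only [betaMoment, ← integral_const_mul]
    rw [← integral_add (Continuous.intervalIntegrable (by fun_prop) 0 1)
      (Continuous.intervalIntegrable (by fun_prop) 0 1)]
    refine integral_mono_on zero_le_one (Continuous.intervalIntegrable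
      (Continuous.mul ((continuous_id.sub continuous_const).abs.rpow_const fun _ => Or.inr ha)
        (by fun_prop)) 0 1)
      (Continuous.intervalIntegrable (by fun_prop) 0 1) fun x hx => ?_
    have h := rpow_le_rpow_add_rpow_sub_mul_pow (abs_nonneg (x - t)) hε0 ha
      (n := 2 * k) (by exact_mod_cast hak)
    rw [pow_abs_two_mul] at h
    push_cast at h
    have := mul_le_mul_of_nonneg_right h (pow_mul_one_sub_pow_nonneg j r hx)
    linarith
  have hmom := betaMoment_two_mul_le hd k
  have hunit := mul_choose_mul_betaMoment_zero j r t
  set c : ℝ := (j + 1) * ((j + r + 1).choose (j + 1) : ℝ)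
  calc c * ∫ x in (0:ℝ)..1, |x - t| ^ a * (x ^ j * (1 - x) ^ r)
      ≤ c * (ε ^ a * betaMoment j r t 0 + ε ^ (a - 2 * k) * betaMoment j r t (2 * k)) := by
        gcongr
    _ ≤ c * (ε ^ a * betaMoment j r t 0
          + ε ^ (a - 2 * k) * (k ! / N ^ k * betaMoment j r t 0)) := by
        gcongr
    _ = (ε ^ a + ε ^ (a - 2 * k) * (k ! / N ^ k)) * (c * betaMoment j r t 0) := by ring
    _ = (k ! + 1) * N ^ (-(a / 2)) := by
        rw [hunit, hεa, hεak]; field_simp; ring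

theorem abs_add_one_sub_mul_midpoint_le_one (j r : ℕ) :
    |(j + 1 : ℝ) - (j + r + 2) * ((2 * (j + 1) - 1) / (2 * (j + r + 1)))| ≤ 1 := by
  rw [show (j + 1 : ℝ) - (j + r + 2) * ((2 * (j + 1) - 1) / (2 * (j + r + 1)))
      = (r - j) / (2 * (j + r + 1)) by field_simp; ring,
    abs_div, abs_of_pos (a := 2 * ((j : ℝ) + r + 1)) (by positivity), div_le_one (by positivity),
    abs_le]
  constructor <;> linarith [(j.cast_nonneg : (0:ℝ) ≤ j), (r.cast_nonneg : (0:ℝ) ≤ r)]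

theorem mul_choose_mul_integral_abs_sub_midpoint_rpow_le (n i k : ℕ) {a : ℝ}
    (hi : 1 ≤ i) (hin : i ≤ n) (ha : 0 ≤ a) (hak : a ≤ 2 * k) :
    (i : ℝ) * (n.choose i : ℝ) *
        ∫ x in (0:ℝ)..1, |x - (2 * (i : ℝ) - 1) / (2 * n)| ^ a * x ^ (i - 1) * (1 - x) ^ (n - i)
      ≤ (k ! + 1) * (n : ℝ) ^ (-(a / 2)) := by
  obtain ⟨j, rfl⟩ : ∃ j, i = j + 1 := ⟨i - 1, by omega⟩
  obtain ⟨r, rfl⟩ : ∃ r, n = j + r + 1 := ⟨n - (j + 1), by omega⟩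
  rw [Nat.add_sub_cancel, show j + r + 1 - (j + 1) = r by omega]
  simp only [mul_assoc (|_| ^ a)]
  push_cast
  exact mul_choose_mul_integral_abs_rpow_le j r k (abs_add_one_sub_mul_midpoint_le_one j r) ha hak

/-- For any real `a > 0`, the expected total displacement to the power `a`
of the order statistics of `n` uniform points on `[0,1]` to the anchors `tᵢ = (2i-1)/(2n)`
is `O(n^{1-a/2})`. Here `|·| ^ a` is the real power. -/
theorem stmt7 (a : ℝ) (ha : 0 < a) :
    ∃ C > 0, ∃ N : ℕ, ∀ n : ℕ, N ≤ n →
      (∑ i ∈ Finset.Icc 1 n, (i : ℝ) * (n.choose i : ℝ) *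
          ∫ x in (0:ℝ)..1,
            |x - (2 * (i : ℝ) - 1) / (2 * n)| ^ a * x ^ (i - 1) * (1 - x) ^ (n - i))
        ≤ C * (n : ℝ) ^ ((1 : ℝ) - a / 2) := by
  set k := ⌈a / 2⌉₊
  have hak : a ≤ 2 * k := by linarith [Nat.le_ceil (a / 2)]
  refine ⟨k ! + 1, by positivity, 1, fun n hn => ?_⟩
  calc _ ≤ ∑ i ∈ Finset.Icc 1 n, (k ! + 1) * (n : ℝ) ^ (-(a / 2)) :=
        Finset.sum_le_sum fun i hi => (Finset.mem_Icc.1 hi).elim fun hi1 hin =>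
          mul_choose_mul_integral_abs_sub_midpoint_rpow_le n i k hi1 hin ha.le hak
    _ = (k ! + 1) * (n : ℝ) ^ ((1 : ℝ) - a / 2) := by
        rw [Finset.sum_const, Nat.card_Icc, nsmul_eq_mul, sub_eq_add_neg,
          Real.rpow_add (Nat.cast_pos.2 hn), Real.rpow_one]
        push_cast
        ring
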